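/- arXiv:0909.4017 — 2 statements merged into one kernel-verified Lean document; each statement's English description precedes it below -/
import Mathlib

section
/- If M2 ≤ N1 ≤ N2 (positive integers), the region {(d1,d2) ∈ ℝ≥0² : d1 ≤ min(M1,N1), d2 ≤ M2, d1+d2 ≤ N1} equals the convex hull of the points (0,0), (min(M1,N1),0), (0,M2), (min(M1,N1), min(M2, N1 - min(M1,N1))), (min(M1, N1 - M2), M2). -/
set_option maxHeartbeats 1000000

private lemma seg_mem {x y p : ℝ × ℝ} (u v : ℝ) (hu : 0 ≤ u) (hv : 0 ≤ v) (huv : u + v = 1)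
    (h1 : u * x.1 + v * y.1 = p.1) (h2 : u * x.2 + v * y.2 = p.2) : p ∈ segment ℝ x y :=
  ⟨u, v, hu, hv, huv, by ext <;> simp [h1, h2]⟩

theorem ic_dof_region_zero_forcing (M1 M2 N1 N2 : ℕ) (hM1 : 0 < M1) (hM2 : 0 < M2)
    (hN1 : 0 < N1) (hN2 : 0 < N2) (h21 : M2 ≤ N1) (h12 : N1 ≤ N2) :
    {p : ℝ × ℝ | 0 ≤ p.1 ∧ 0 ≤ p.2 ∧ p.1 ≤ (min M1 N1 : ℕ) ∧ p.2 ≤ (M2 : ℝ) ∧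
        p.1 + p.2 ≤ (N1 : ℝ)}
      = convexHull ℝ {((0 : ℝ), (0 : ℝ)), (((min M1 N1 : ℕ) : ℝ), 0), (0, (M2 : ℝ)),
          (((min M1 N1 : ℕ) : ℝ), ((min M2 (N1 - min M1 N1) : ℕ) : ℝ)),
          (((min M1 (N1 - M2) : ℕ) : ℝ), (M2 : ℝ))} := by
  set a : ℝ := ((min M1 N1 : ℕ) : ℝ) with ha_def
  set b : ℝ := (M2 : ℝ) with hb_def
  set n : ℝ := (N1 : ℝ) with hn_def
  set cR : ℝ := ((min M2 (N1 - min M1 N1) : ℕ) : ℝ) with hc_def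
  set dR : ℝ := ((min M1 (N1 - M2) : ℕ) : ℝ) with hd_def
  have ha : 0 < a := by
    rw [ha_def]; exact_mod_cast Nat.lt_of_lt_of_le (Nat.zero_lt_one) (by omega)
  have hb : 0 < b := by rw [hb_def]; exact_mod_cast hM2
  have hn : 0 < n := by rw [hn_def]; exact_mod_cast hN1
  have han : a ≤ n := by rw [ha_def, hn_def]; exact_mod_cast min_le_right M1 N1
  have hbn : b ≤ n := by rw [hb_def, hn_def]; exact_mod_cast h21
  have hc : cR = min b (n - a) := by
    rw [hc_def, ha_def, hb_def, hn_def, Nat.cast_min,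
      Nat.cast_sub (min_le_right M1 N1)]
  have hd : dR = min a (n - b) := by
    have : min M1 (N1 - M2) = min (min M1 N1) (N1 - M2) := by omega
    rw [hd_def, this, Nat.cast_min, Nat.cast_sub h21]
  set S : Set (ℝ × ℝ) := {((0 : ℝ), (0 : ℝ)), (a, 0), (0, b), (a, cR), (dR, b)} with hS_def
  have hOmem : ((0 : ℝ), (0 : ℝ)) ∈ convexHull ℝ S := subset_convexHull ℝ S (by simp [hS_def])
  have hAmem : ((a : ℝ), (0 : ℝ)) ∈ convexHull ℝ S := subset_convexHull ℝ S (by simp [hS_def])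
  have hBmem : ((0 : ℝ), b) ∈ convexHull ℝ S := subset_convexHull ℝ S (by simp [hS_def])
  have hCmem : ((a : ℝ), cR) ∈ convexHull ℝ S := subset_convexHull ℝ S (by simp [hS_def])
  have hDmem : (dR, b) ∈ convexHull ℝ S := subset_convexHull ℝ S (by simp [hS_def])
  have hconv := convex_convexHull ℝ S
  apply Set.Subset.antisymm
  · rintro ⟨d1, d2⟩ ⟨h01, h02, hpa, hpb, hpn⟩
    simp only at h01 h02 hpa hpb hpn
    -- trivial case p = 0
    rcases eq_or_lt_of_le (by linarith : (0:ℝ) ≤ d1 + d2) with hs0 | hs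
    · have h1 : d1 = 0 := by linarith
      have h2 : d2 = 0 := by linarith
      rw [h1, h2]; exact hOmem
    by_cases h1 : a * (d1 + d2) ≤ n * d1 ∧ d2 * a ≤ d1 * b
    · obtain ⟨hA1, hA2⟩ := h1
      have hd1 : 0 < d1 := by nlinarith
      set q2 : ℝ := a * d2 / d1 with hq2_def
      have hq20 : 0 ≤ q2 := by positivity
      have hq2c : q2 ≤ cR := by
        rw [hc, le_min_iff]
        constructor
        · rw [hq2_def, div_le_iff₀ hd1]; nlinarith
        · rw [hq2_def, div_le_iff₀ hd1]; nlinarith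
      have hqseg : ((a : ℝ), q2) ∈ segment ℝ ((a : ℝ), (0:ℝ)) ((a : ℝ), cR) := by
        rcases eq_or_lt_of_le (le_trans hq20 hq2c) with hcR0 | hcRpos
        · have : q2 = 0 := le_antisymm (hcR0 ▸ hq2c) hq20
          exact seg_mem 1 0 one_pos.le le_rfl (by ring) (by ring) (by rw [this]; ring)
        · refine seg_mem (1 - q2 / cR) (q2 / cR) ?_ (by positivity) (by ring) (by ring) ?_
          · have : q2 / cR ≤ 1 := by rw [div_le_one hcRpos]; exact hq2c
            linarith
          · field_simp; ring
      have hqmem := hconv.segment_subset hAmem hCmem hqseg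
      refine hconv.segment_subset hOmem hqmem (seg_mem (1 - d1 / a) (d1 / a) ?_ (by positivity) (by ring) ?_ ?_)
      · have : d1 / a ≤ 1 := by rw [div_le_one ha]; exact hpa
        linarith
      · field_simp; ring
      · simp only [hq2_def]; field_simp; ring
    · by_cases h2 : b * (d1 + d2) ≤ n * d2 ∧ d1 * b ≤ d2 * a
      · obtain ⟨hB1, hB2⟩ := h2
        have hd2 : 0 < d2 := by nlinarith
        set q1 : ℝ := b * d1 / d2 with hq1_def
        have hq10 : 0 ≤ q1 := by positivity
        have hq1d : q1 ≤ dR := by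
          rw [hd, le_min_iff]
          constructor
          · rw [hq1_def, div_le_iff₀ hd2]; nlinarith
          · rw [hq1_def, div_le_iff₀ hd2]; nlinarith
        have hqseg : (q1, b) ∈ segment ℝ ((0:ℝ), b) (dR, b) := by
          rcases eq_or_lt_of_le (le_trans hq10 hq1d) with hdR0 | hdRpos
          · have : q1 = 0 := le_antisymm (hdR0 ▸ hq1d) hq10
            exact seg_mem 1 0 one_pos.le le_rfl (by ring) (by rw [this]; ring) (by ring)
          · refine seg_mem (1 - q1 / dR) (q1 / dR) ?_ (by positivity) (by ring) ?_ (by ring)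
            · have : q1 / dR ≤ 1 := by rw [div_le_one hdRpos]; exact hq1d
              linarith
            · field_simp; ring
        have hqmem := hconv.segment_subset hBmem hDmem hqseg
        refine hconv.segment_subset hOmem hqmem (seg_mem (1 - d2 / b) (d2 / b) ?_ (by positivity) (by ring) ?_ ?_)
        · have : d2 / b ≤ 1 := by rw [div_le_one hb]; exact hpb
          linarith
        · simp only [hq1_def]; field_simp; ring
        · field_simp; ring
      · push_neg at h1 h2
        have hC1 : n * d1 < a * (d1 + d2) := by
          rcases le_total (d2 * a) (d1 * b) with h | h
          · by_contra hcon
            push_neg at hcon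
            exact absurd h (not_le.2 (h1 hcon))
          · -- from case B failing: b*(d1+d2) ≤ n*d2 → d2*a < d1*b, so b*s > n*d2
            have hC2 : n * d2 < b * (d1 + d2) := by
              by_contra hcon
              push_neg at hcon
              exact absurd h (not_le.2 (h2 hcon))
            have hd2pos : 0 < d2 := by nlinarith
            have hnab : n < a + b := by nlinarith
            nlinarith [mul_pos ha hs]
        have hC2 : n * d2 < b * (d1 + d2) := by
          rcases le_total (d1 * b) (d2 * a) with h | h
          · by_contra hcon
            push_neg at hcon
            exact absurd h (not_le.2 (h2 hcon))
          · have hd1pos : 0 < d1 := by nlinarith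
            have hnab : n < a + b := by nlinarith
            nlinarith [mul_pos hb hs]
        have hnab : n < a + b := by nlinarith
        have hcR : cR = n - a := by rw [hc]; exact min_eq_right (by linarith)
        have hdR : dR = n - b := by rw [hd]; exact min_eq_right (by linarith)
        set q1 : ℝ := n * d1 / (d1 + d2) with hq1_def
        have hq1a : q1 ≤ a := by rw [hq1_def, div_le_iff₀ hs]; nlinarith
        have hq1d : n - b ≤ q1 := by
          rw [hq1_def, le_div_iff₀ hs]; nlinarith
        have hqseg : (q1, n - q1) ∈ segment ℝ (dR, b) ((a : ℝ), cR) := by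
          rw [hcR, hdR]
          have hden : 0 < a + b - n := by linarith
          refine seg_mem ((a - q1) / (a + b - n)) ((q1 - (n - b)) / (a + b - n))
            (div_nonneg (by linarith) hden.le) (div_nonneg (by linarith) hden.le) ?_ ?_ ?_
          · field_simp; ring
          · field_simp; ring
          · field_simp; ring
        have hqmem := hconv.segment_subset hDmem hCmem hqseg
        refine hconv.segment_subset hOmem hqmem
          (seg_mem (1 - (d1 + d2) / n) ((d1 + d2) / n) ?_ (by positivity) (by ring) ?_ ?_)
        · have : (d1 + d2) / n ≤ 1 := by rw [div_le_one hn]; exact hpn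
          linarith
        · simp only [hq1_def]; field_simp; ring
        · simp only [hq1_def]; field_simp; ring
  · apply convexHull_min
    · intro q hq
      have hca : a + cR ≤ n := by
        rw [ha_def, hc_def, hn_def]
        exact_mod_cast (by omega : min M1 N1 + min M2 (N1 - min M1 N1) ≤ N1)
      have hcb : cR ≤ b := by
        rw [hc_def, hb_def]; exact_mod_cast min_le_left _ _
      have hc0 : 0 ≤ cR := by rw [hc_def]; positivity
      have hda : dR ≤ a := by
        rw [hd_def, ha_def]
        exact_mod_cast (by omega : min M1 (N1 - M2) ≤ min M1 N1)
      have hdb : dR + b ≤ n := by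
        rw [hd_def, hb_def, hn_def]
        exact_mod_cast (by omega : min M1 (N1 - M2) + M2 ≤ N1)
      have hd0 : 0 ≤ dR := by rw [hd_def]; positivity
      simp only [hS_def, Set.mem_insert_iff, Set.mem_singleton_iff] at hq
      rcases hq with rfl | rfl | rfl | rfl | rfl <;>
        refine ⟨by simp; try linarith, by simp; try linarith, by simp; try linarith,
          by simp; try linarith, by simp; try linarith⟩
    · rintro ⟨x1, x2⟩ ⟨hx1, hx2, hx3, hx4, hx5⟩ ⟨y1, y2⟩ ⟨hy1, hy2, hy3, hy4, hy5⟩ u v hu hv huv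
      simp only at hx1 hx2 hx3 hx4 hx5 hy1 hy2 hy3 hy4 hy5
      simp only [Prod.fst_add, Prod.snd_add, Prod.smul_fst, Prod.smul_snd, smul_eq_mul,
        Set.mem_setOf_eq]
      refine ⟨add_nonneg (mul_nonneg hu hx1) (mul_nonneg hv hy1),
        add_nonneg (mul_nonneg hu hx2) (mul_nonneg hv hy2), ?_, ?_, ?_⟩
      · nlinarith [mul_le_mul_of_nonneg_left hx3 hu, mul_le_mul_of_nonneg_left hy3 hv]
      · nlinarith [mul_le_mul_of_nonneg_left hx4 hu, mul_le_mul_of_nonneg_left hy4 hv]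
      · nlinarith [mul_le_mul_of_nonneg_left hx5 hu, mul_le_mul_of_nonneg_left hy5 hv]
end

section
/- If N1 ≤ N2, N1 < M2 and N1 ≤ M1 (positive integers), then the region {(d1,d2) ∈ ℝ≥0² : d1/N1 + d2/min(M2,N2) ≤ 1} is contained in the perfect-CSIT region {(d1,d2) ∈ ℝ≥0² : d1 ≤ min(M1,N1), d2 ≤ min(M2,N2), d1+d2 ≤ min(max(M1,N2), max(M2,N1))}, and the containment is strict when N1 < N2 and N1 < min(M2,N2). -/
/-!
With perfect CSIT the region is cut out by the single-user bounds `d₁ ≤ c₁`, `d₂ ≤ c₂` and a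
sum bound `d₁ + d₂ ≤ s`; without CSIT it is the triangle `d₁ / a + d₂ / b ≤ 1` with `a = N₁` and
`b = min M₂ N₂`. Since `a ≤ b`, the triangle lies below the line `d₁ + d₂ = b`, and `b` is at most
each of `c₂`, `s`, while `a = min M₁ N₁ = c₁`. When `a < b` the corner `(a, b - a)` of the CSIT
region lies strictly outside the triangle.
-/

namespace InterferenceChannel

variable {K : Type*} [Field K] [LinearOrder K] [IsStrictOrderedRing K]

def triangleRegion (a b : K) : Set (K × K) :=
  {p | 0 ≤ p.1 ∧ 0 ≤ p.2 ∧ p.1 / a + p.2 / b ≤ 1}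

def boxSumRegion (c₁ c₂ s : K) : Set (K × K) :=
  {p | 0 ≤ p.1 ∧ 0 ≤ p.2 ∧ p.1 ≤ c₁ ∧ p.2 ≤ c₂ ∧ p.1 + p.2 ≤ s}

section

variable {a b x y : K}

theorem add_le_of_div_add_div_le_one (ha : 0 < a) (hab : a ≤ b) (hx : 0 ≤ x)
    (h : x / a + y / b ≤ 1) : x + y ≤ b := by
  have hb : 0 < b := ha.trans_le hab
  have : x / b ≤ x / a := div_le_div_of_nonneg_left hx ha hab
  rw [← div_le_one hb, add_div]
  linarith

theorem le_of_div_add_div_le_one_left (ha : 0 < a) (hy : 0 ≤ y) (hb : 0 ≤ b)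
    (h : x / a + y / b ≤ 1) : x ≤ a := by
  have : 0 ≤ y / b := div_nonneg hy hb
  rw [← div_le_one ha]
  linarith

end

variable {a b c₁ c₂ s : K}

theorem triangleRegion_subset_boxSumRegion (ha : 0 < a) (hab : a ≤ b) (hc₁ : a ≤ c₁)
    (hc₂ : b ≤ c₂) (hs : b ≤ s) : triangleRegion a b ⊆ boxSumRegion c₁ c₂ s := by
  rintro ⟨x, y⟩ ⟨hx, hy, h⟩
  have hb : 0 < b := ha.trans_le hab
  have hsum : x + y ≤ b := add_le_of_div_add_div_le_one ha hab hx h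
  refine ⟨hx, hy, ?_, by linarith, by linarith⟩
  exact (le_of_div_add_div_le_one_left ha hy hb.le h).trans hc₁

theorem corner_not_mem_triangleRegion (ha : 0 < a) (hab : a < b) :
    (a, b - a) ∉ triangleRegion a b := by
  rintro ⟨-, -, h⟩
  have : 0 < (b - a) / b := div_pos (sub_pos.mpr hab) (ha.trans hab)
  rw [div_self ha.ne'] at h
  linarith

theorem corner_mem_boxSumRegion (ha : 0 < a) (hab : a < b) (hc₁ : a ≤ c₁) (hc₂ : b ≤ c₂)
    (hs : b ≤ s) : (a, b - a) ∈ boxSumRegion c₁ c₂ s :=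
  ⟨ha.le, sub_nonneg.mpr hab.le, hc₁, by linarith, by simpa using hs⟩

theorem triangleRegion_ssubset_boxSumRegion (ha : 0 < a) (hab : a < b) (hc₁ : a ≤ c₁)
    (hc₂ : b ≤ c₂) (hs : b ≤ s) : triangleRegion a b ⊂ boxSumRegion c₁ c₂ s :=
  Set.ssubset_iff_of_subset (triangleRegion_subset_boxSumRegion ha hab.le hc₁ hc₂ hs) |>.mpr
    ⟨_, corner_mem_boxSumRegion ha hab hc₁ hc₂ hs, corner_not_mem_triangleRegion ha hab⟩

end InterferenceChannel

open InterferenceChannel in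
theorem ic_noCSIT_subset_CSIT_general (M1 M2 N1 N2 : ℕ)
    (hN1 : 0 < N1) (h12 : N1 ≤ N2) (h1M2 : N1 < M2) (h1M1 : N1 ≤ M1) :
    ({p : ℝ × ℝ | 0 ≤ p.1 ∧ 0 ≤ p.2 ∧
        p.1 / (N1 : ℝ) + p.2 / (min M2 N2 : ℕ) ≤ 1}
      ⊆ {p : ℝ × ℝ | 0 ≤ p.1 ∧ 0 ≤ p.2 ∧ p.1 ≤ (min M1 N1 : ℕ) ∧ p.2 ≤ (min M2 N2 : ℕ) ∧
          p.1 + p.2 ≤ (min (max M1 N2) (max M2 N1) : ℕ)})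
    ∧ (N1 < N2 → N1 < min M2 N2 →
      {p : ℝ × ℝ | 0 ≤ p.1 ∧ 0 ≤ p.2 ∧
          p.1 / (N1 : ℝ) + p.2 / (min M2 N2 : ℕ) ≤ 1}
        ⊂ {p : ℝ × ℝ | 0 ≤ p.1 ∧ 0 ≤ p.2 ∧ p.1 ≤ (min M1 N1 : ℕ) ∧ p.2 ≤ (min M2 N2 : ℕ) ∧
            p.1 + p.2 ≤ (min (max M1 N2) (max M2 N1) : ℕ)}) := by
  have ha : (0 : ℝ) < N1 := by exact_mod_cast hN1
  have hc₁ : (N1 : ℝ) ≤ (min M1 N1 : ℕ) := by rw [min_eq_right h1M1]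
  have hs : ((min M2 N2 : ℕ) : ℝ) ≤ (min (max M1 N2) (max M2 N1) : ℕ) := by
    exact_mod_cast le_min ((min_le_right _ _).trans (le_max_right _ _))
      ((min_le_left _ _).trans (le_max_left _ _))
  have hab : (N1 : ℝ) ≤ (min M2 N2 : ℕ) := by exact_mod_cast le_min h1M2.le h12
  refine ⟨triangleRegion_subset_boxSumRegion ha hab hc₁ le_rfl hs, fun _ hlt => ?_⟩
  exact triangleRegion_ssubset_boxSumRegion ha (by exact_mod_cast hlt) hc₁ le_rfl hs

theorem ic_noCSIT_subset_CSIT (M1 M2 N1 N2 : ℕ) (hM1 : 0 < M1) (hM2 : 0 < M2)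
    (hN1 : 0 < N1) (hN2 : 0 < N2) (h12 : N1 ≤ N2) (h1M2 : N1 < M2) (h1M1 : N1 ≤ M1) :
    ({p : ℝ × ℝ | 0 ≤ p.1 ∧ 0 ≤ p.2 ∧
        p.1 / (N1 : ℝ) + p.2 / (min M2 N2 : ℕ) ≤ 1}
      ⊆ {p : ℝ × ℝ | 0 ≤ p.1 ∧ 0 ≤ p.2 ∧ p.1 ≤ (min M1 N1 : ℕ) ∧ p.2 ≤ (min M2 N2 : ℕ) ∧
          p.1 + p.2 ≤ (min (max M1 N2) (max M2 N1) : ℕ)})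
    ∧ (N1 < N2 → N1 < min M2 N2 →
      {p : ℝ × ℝ | 0 ≤ p.1 ∧ 0 ≤ p.2 ∧
          p.1 / (N1 : ℝ) + p.2 / (min M2 N2 : ℕ) ≤ 1}
        ⊂ {p : ℝ × ℝ | 0 ≤ p.1 ∧ 0 ≤ p.2 ∧ p.1 ≤ (min M1 N1 : ℕ) ∧ p.2 ≤ (min M2 N2 : ℕ) ∧
            p.1 + p.2 ≤ (min (max M1 N2) (max M2 N1) : ℕ)}) :=
  ic_noCSIT_subset_CSIT_general M1 M2 N1 N2 hN1 h12 h1M2 h1M1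
end
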